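/- arXiv:1912.08378 — 2 statements merged into one kernel-verified Lean document; each statement's English description precedes it below -/
import Mathlib

section
/- Let c, D > 0 and let G be a finite Borel measure on [0,∞). For every fixed t ≥ 0 and every fixed angular distance γ ∈ (0,π], the integral ∫_0^∞ |R(cos γ, t+h, t)| dh is finite if and only if ∫_{[0, c/(2D))} μ^{−2} G(dμ) < ∞ (with the convention that the integrand equals +∞ at μ = 0). That is, the spherical hyperbolic diffusion random field is short-range dependent if and only if μ^{−2}G(dμ) is integrable in a neighbourhood of the origin. -/
open MeasureTheory Real Set

/-- `H̃₁(μ,t)` for the subcritical regime `0 ≤ μ < c/(2D)`. -/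
noncomputable def Htilde1 (c D μ t : ℝ) : ℝ :=
  Real.exp (-(c ^ 2 * t) / (2 * D)) *
    (Real.cosh (c * t * Real.sqrt (c ^ 2 / (4 * D ^ 2) - μ ^ 2)) +
      c / (2 * D * Real.sqrt (c ^ 2 / (4 * D ^ 2) - μ ^ 2)) *
        Real.sinh (c * t * Real.sqrt (c ^ 2 / (4 * D ^ 2) - μ ^ 2)))

/-- `H̃₂(μ,t)` for the supercritical regime `μ > c/(2D)`. -/
noncomputable def Htilde2 (c D μ t : ℝ) : ℝ :=
  Real.exp (-(c ^ 2 * t) / (2 * D)) *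
    (Real.cos (c * t * Real.sqrt (μ ^ 2 - c ^ 2 / (4 * D ^ 2))) +
      c / (2 * D * Real.sqrt (μ ^ 2 - c ^ 2 / (4 * D ^ 2))) *
        Real.sin (c * t * Real.sqrt (μ ^ 2 - c ^ 2 / (4 * D ^ 2))))

/-- `H̃(μ,t)`, pieced together from `H̃₁`, the value at `μ = c/(2D)`, and `H̃₂`. -/
noncomputable def Htilde (c D μ t : ℝ) : ℝ :=
  if μ < c / (2 * D) then Htilde1 c D μ t
  else if μ = c / (2 * D) then Real.exp (-(c ^ 2 * t) / (2 * D)) * (1 + c ^ 2 * t / (2 * D))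
  else Htilde2 c D μ t

/-- `sinc x = sin x / x` for `x ≠ 0`, `sinc 0 = 1`. -/
noncomputable def sinc (x : ℝ) : ℝ := if x = 0 then 1 else Real.sin x / x

/-!
Write `κ(μ) = min (D μ²) (c²/(32 D))`. For `μ < c/(2D)` the factor `H̃(μ, s)` is a damped
`cosh`/`sinh` combination, positive and at least `exp(-2Dμ²s)/2`; for `μ ≤ c/(4D)` it is at most
`3 exp(-Dμ²s)`, and for `μ ≥ c/(4D)` it decays at the uniform rate `c²/(32D)`. Hence
`|H̃(μ, s)| ≤ 16 exp(-κ(μ) s)`, and by Tonelli `∫₀^∞ |R(h)| dh ≤ 256 ∫ κ(μ)⁻¹ G(dμ)`, which is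
finite when `μ⁻²` is `G`-integrable near `0`.

Conversely, on `[0, ε)` with `ε = min (1/2) (c/(2D))` we have `sinc ≥ 1/2` and the integrand of `R`
is at least `exp(-Dt)/8 · exp(-2Dμ²h)`, whose integral over `h` is a multiple of `μ⁻²`; the part
of `R` coming from `μ ≥ ε` has an `h`-integrable modulus by the first half of the argument.
-/

theorem Real.half_le_sinc {x : ℝ} (hx : |x| ≤ 1) : 1 / 2 ≤ Real.sinc x := by
  wlog hx0 : 0 ≤ x generalizing x
  · simpa using this (x := -x) (by rwa [abs_neg]) (by linarith)
  rcases hx0.eq_or_lt with rfl | hpos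
  · norm_num
  have hxπ : x ≤ π / 2 := by linarith [(abs_le.mp hx).2, pi_gt_three]
  have hπ : 1 / 2 ≤ 2 / π := by rw [div_le_div_iff₀ two_pos pi_pos]; linarith [pi_le_four]
  rw [Real.sinc_of_ne_zero hpos.ne', le_div_iff₀ hpos]
  nlinarith [mul_le_sin hx0 hxπ]

section HyperbolicProfile
variable {k y : ℝ}

theorem cosh_le_exp_of_nonneg (hy : 0 ≤ y) : cosh y ≤ exp y := by
  rw [cosh_eq]; linarith [exp_le_exp.mpr (neg_le_self hy)]

theorem exp_div_two_le_cosh_add_mul_sinh (hk : 0 ≤ k) (hy : 0 ≤ y) :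
    exp y / 2 ≤ cosh y + k * sinh y := by
  have : exp y / 2 ≤ cosh y := by rw [cosh_eq]; linarith [exp_pos (-y)]
  nlinarith [sinh_nonneg_iff.mpr hy]

theorem cosh_add_mul_sinh_le_one_add_mul_exp (hk : 0 ≤ k) (hy : 0 ≤ y) :
    cosh y + k * sinh y ≤ (1 + k) * exp y := by
  have hcosh := cosh_le_exp_of_nonneg hy
  have hsinh : sinh y ≤ exp y := (sinh_lt_cosh y).le.trans hcosh
  nlinarith

theorem cosh_add_mul_sinh_le_one_add_mul_mul_exp (hk : 0 ≤ k) (hy : 0 ≤ y) :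
    cosh y + k * sinh y ≤ (1 + k * y) * exp y := by
  have hcosh := cosh_le_exp_of_nonneg hy
  have hsinh : sinh y ≤ y * exp y := by
    have h : exp (-y) = exp y * exp (-(2 * y)) := by rw [← exp_add]; ring_nf
    rw [sinh_eq, h]
    nlinarith [add_one_le_exp (-(2 * y)), exp_pos y]
  nlinarith

theorem abs_cos_add_mul_sin_le (hk : 0 ≤ k) (hy : 0 ≤ y) :
    |cos y + k * sin y| ≤ 1 + k * y := by
  calc |cos y + k * sin y| ≤ |cos y| + k * |sin y| := by
        simpa [abs_mul, abs_of_nonneg hk] using abs_add_le (cos y) (k * sin y)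
    _ ≤ 1 + k * y := by
        gcongr
        · exact abs_cos_le_one y
        · simpa [abs_of_nonneg hy] using abs_sin_le_abs (x := y)

end HyperbolicProfile

theorem one_add_mul_exp_neg_div_eight_le {y : ℝ} :
    (1 + y) * exp (-(y / 8)) ≤ 16 * exp (-(y / 16)) := by
  have h : (1 + y) ≤ 16 * exp (y / 16) := by nlinarith [add_one_le_exp (y / 16)]
  calc (1 + y) * exp (-(y / 8)) ≤ 16 * exp (y / 16) * exp (-(y / 8)) := by gcongr
    _ = 16 * exp (-(y / 16)) := by rw [mul_assoc, ← exp_add]; ring_nf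

theorem lintegral_Ici_ofReal_mul_exp_neg_mul {C a : ℝ} (hC : 0 ≤ C) (ha : 0 ≤ a) :
    ∫⁻ h in Ici (0 : ℝ), ENNReal.ofReal (C * exp (-(a * h))) =
      ENNReal.ofReal C * (ENNReal.ofReal a)⁻¹ := by
  simp_rw [ENNReal.ofReal_mul hC]
  rw [lintegral_const_mul' _ _ ENNReal.ofReal_ne_top]
  congr 1
  rcases ha.eq_or_lt with rfl | ha
  · simp [Real.volume_Ici]
  rw [← restrict_Ioi_eq_restrict_Ici, ← ofReal_integral_eq_lintegral_ofReal
      (by simpa [neg_mul] using (exp_neg_integrableOn_Ioi 0 ha).integrable)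
      (ae_of_all _ fun x => (exp_pos _).le)]
  have := integral_comp_mul_left_Ioi (fun u => exp (-u)) 0 ha
  simp only [mul_zero, integral_exp_neg_Ioi, smul_eq_mul, neg_zero, exp_zero, mul_one] at this
  rw [this, ENNReal.ofReal_inv_of_pos ha]

section Htilde
variable {c D b μ s : ℝ}

theorem Htilde_of_lt (hD : 0 < D) (hb : c = 2 * D * b) (hμ : μ < b) :
    Htilde c D μ s = exp (-(b * (c * s))) * (cosh (√(b ^ 2 - μ ^ 2) * (c * s)) +
      b / √(b ^ 2 - μ ^ 2) * sinh (√(b ^ 2 - μ ^ 2) * (c * s))) := by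
  subst hb
  have hb : 2 * D * b / (2 * D) = b := by field_simp
  have hb2 : (2 * D * b) ^ 2 / (4 * D ^ 2) = b ^ 2 := by field_simp; ring
  have he : -((2 * D * b) ^ 2 * s) / (2 * D) = -(b * (2 * D * b * s)) := by field_simp
  rw [Htilde, hb, if_pos hμ, Htilde1, hb2, he, mul_div_mul_left b _ (by positivity),
    mul_comm (2 * D * b * s)]

theorem Htilde_of_gt (hD : 0 < D) (hb : c = 2 * D * b) (hμ : b < μ) :
    Htilde c D μ s = exp (-(b * (c * s))) * (cos (√(μ ^ 2 - b ^ 2) * (c * s)) +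
      b / √(μ ^ 2 - b ^ 2) * sin (√(μ ^ 2 - b ^ 2) * (c * s))) := by
  subst hb
  have hb : 2 * D * b / (2 * D) = b := by field_simp
  have hb2 : (2 * D * b) ^ 2 / (4 * D ^ 2) = b ^ 2 := by field_simp; ring
  have he : -((2 * D * b) ^ 2 * s) / (2 * D) = -(b * (2 * D * b * s)) := by field_simp
  rw [Htilde, hb, if_neg hμ.not_gt, if_neg hμ.ne', Htilde2, hb2, he,
    mul_div_mul_left b _ (by positivity), mul_comm (2 * D * b * s)]

theorem Htilde_of_eq (hD : 0 < D) (hb : c = 2 * D * b) :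
    Htilde c D b s = exp (-(b * (c * s))) * (1 + b * (c * s)) := by
  subst hb
  have hb : 2 * D * b / (2 * D) = b := by field_simp
  rw [Htilde, hb, if_neg (lt_irrefl b), if_pos rfl]
  congr 2 <;> field_simp

end Htilde

section HtildeBounds
variable {c D μ s : ℝ}

theorem exp_neg_mul_mul_exp (b l x C : ℝ) :
    exp (-(b * x)) * (C * exp (l * x)) = C * exp (-((b - l) * x)) := by
  rw [mul_left_comm, ← exp_add]; ring_nf

theorem Htilde_lower (hc : 0 < c) (hD : 0 < D) (hμ0 : 0 ≤ μ) (hμ : μ < c / (2 * D))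
    (hs : 0 ≤ s) : exp (-(2 * D * μ ^ 2 * s)) / 2 ≤ Htilde c D μ s := by
  set b := c / (2 * D)
  have hb : c = 2 * D * b := by simp only [b]; field_simp
  rw [Htilde_of_lt hD hb hμ]
  set l := √(b ^ 2 - μ ^ 2)
  have hl : l ^ 2 = b ^ 2 - μ ^ 2 := sq_sqrt (by nlinarith)
  have hl0 : 0 < l := sqrt_pos.mpr (by nlinarith)
  have hlb : l ≤ b := by nlinarith
  have hdecay : (b - l) * (c * s) ≤ 2 * D * μ ^ 2 * s := by
    rw [hb]
    have : (b - l) * b ≤ μ ^ 2 := by nlinarith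
    nlinarith [mul_le_mul_of_nonneg_left this (by positivity : 0 ≤ 2 * D * s)]
  calc exp (-(2 * D * μ ^ 2 * s)) / 2 ≤ 1 / 2 * exp (-((b - l) * (c * s))) := by
        rw [one_div_mul_eq_div]; gcongr
    _ = exp (-(b * (c * s))) * (1 / 2 * exp (l * (c * s))) := (exp_neg_mul_mul_exp _ _ _ _).symm
    _ ≤ _ := by
        gcongr
        rw [one_div_mul_eq_div]
        exact exp_div_two_le_cosh_add_mul_sinh (by positivity) (by positivity)

theorem Htilde_nonneg (hc : 0 < c) (hD : 0 < D) (hμ0 : 0 ≤ μ) (hμ : μ < c / (2 * D))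
    (hs : 0 ≤ s) : 0 ≤ Htilde c D μ s :=
  (by positivity : (0 : ℝ) ≤ exp (-(2 * D * μ ^ 2 * s)) / 2).trans (Htilde_lower hc hD hμ0 hμ hs)

theorem abs_Htilde_le_of_le_half (hc : 0 < c) (hD : 0 < D) (hμ0 : 0 ≤ μ)
    (hμ : μ ≤ c / (2 * D) / 2) (hs : 0 ≤ s) :
    |Htilde c D μ s| ≤ 3 * exp (-(D * μ ^ 2 * s)) := by
  set b := c / (2 * D)
  have hb : c = 2 * D * b := by simp only [b]; field_simp
  have hb0 : 0 < b := by positivity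
  have hμb : μ < b := by linarith
  rw [abs_of_nonneg (Htilde_nonneg hc hD hμ0 hμb hs), Htilde_of_lt hD hb hμb]
  set l := √(b ^ 2 - μ ^ 2)
  have hl : l ^ 2 = b ^ 2 - μ ^ 2 := sq_sqrt (by nlinarith)
  have hl0 : 0 < l := sqrt_pos.mpr (by nlinarith)
  have hlb : b ≤ 2 * l := by nlinarith
  have hdecay : D * μ ^ 2 * s ≤ (b - l) * (c * s) := by
    rw [hb]
    have : μ ^ 2 ≤ 2 * b * (b - l) := by nlinarith
    nlinarith [mul_le_mul_of_nonneg_left this (by positivity : 0 ≤ D * s)]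
  calc exp (-(b * (c * s))) * (cosh (l * (c * s)) + b / l * sinh (l * (c * s)))
      ≤ exp (-(b * (c * s))) * ((1 + b / l) * exp (l * (c * s))) := by
        gcongr
        exact cosh_add_mul_sinh_le_one_add_mul_exp (by positivity) (by positivity)
    _ = (1 + b / l) * exp (-((b - l) * (c * s))) := exp_neg_mul_mul_exp _ _ _ _
    _ ≤ 3 * exp (-(D * μ ^ 2 * s)) := by
        gcongr
        linarith [(div_le_iff₀ hl0).mpr (by linarith : b ≤ 2 * l)]

theorem abs_Htilde_le_of_half_le (hc : 0 < c) (hD : 0 < D) (hμ : c / (2 * D) / 2 ≤ μ)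
    (hs : 0 ≤ s) : |Htilde c D μ s| ≤ 16 * exp (-(c ^ 2 / (32 * D) * s)) := by
  set b := c / (2 * D)
  have hb : c = 2 * D * b := by simp only [b]; field_simp
  have hb0 : 0 < b := by positivity
  set x := c * s
  have hx : 0 ≤ x := by positivity
  have hbx : 0 ≤ b * x := by positivity
  have key : |Htilde c D μ s| ≤ (1 + b * x) * exp (-(b * x / 8)) := by
    rcases lt_trichotomy μ b with hμb | rfl | hμb
    · rw [abs_of_nonneg (Htilde_nonneg hc hD (by linarith) hμb hs), Htilde_of_lt hD hb hμb]
      set l := √(b ^ 2 - μ ^ 2)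
      have hl : l ^ 2 = b ^ 2 - μ ^ 2 := sq_sqrt (by nlinarith)
      have hl0 : 0 < l := sqrt_pos.mpr (by nlinarith)
      have hlb : 8 * l ≤ 7 * b := by nlinarith
      have hbl : b / l * (l * x) = b * x := by field_simp
      calc exp (-(b * x)) * (cosh (l * x) + b / l * sinh (l * x))
          ≤ exp (-(b * x)) * ((1 + b / l * (l * x)) * exp (l * x)) := by
            gcongr
            exact cosh_add_mul_sinh_le_one_add_mul_mul_exp (by positivity) (by positivity)
        _ = (1 + b * x) * exp (-((b - l) * x)) := by
            rw [exp_neg_mul_mul_exp, hbl]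
        _ ≤ (1 + b * x) * exp (-(b * x / 8)) := by gcongr; nlinarith
    · rw [Htilde_of_eq hD hb, abs_of_nonneg (by positivity), mul_comm]
      gcongr
      linarith
    · rw [Htilde_of_gt hD hb hμb, abs_mul, abs_exp, mul_comm]
      set l := √(μ ^ 2 - b ^ 2)
      have hl0 : 0 < l := sqrt_pos.mpr (by nlinarith)
      have hbl : b / l * (l * x) = b * x := by field_simp
      calc |cos (l * x) + b / l * sin (l * x)| * exp (-(b * x))
          ≤ (1 + b / l * (l * x)) * exp (-(b * x)) := by
            gcongr
            exact abs_cos_add_mul_sin_le (by positivity) (by positivity)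
        _ ≤ (1 + b * x) * exp (-(b * x / 8)) := by
            rw [hbl]
            gcongr
            linarith
  have hy : c ^ 2 / (32 * D) * s = b * x / 16 := by
    simp only [b, x]; field_simp; ring
  calc |Htilde c D μ s| ≤ (1 + b * x) * exp (-(b * x / 8)) := key
    _ ≤ 16 * exp (-(b * x / 16)) := one_add_mul_exp_neg_div_eight_le
    _ = 16 * exp (-(c ^ 2 / (32 * D) * s)) := by rw [hy]

end HtildeBounds

noncomputable def decayRate (c D μ : ℝ) : ℝ := min (D * μ ^ 2) (c ^ 2 / (32 * D))

section DecayRate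
variable {c D μ s : ℝ}

theorem decayRate_nonneg (hD : 0 ≤ D) : 0 ≤ decayRate c D μ :=
  le_min (by positivity) (by positivity)

theorem abs_Htilde_le (hc : 0 < c) (hD : 0 < D) (hμ0 : 0 ≤ μ) (hs : 0 ≤ s) :
    |Htilde c D μ s| ≤ 16 * exp (-(decayRate c D μ * s)) := by
  rcases le_total μ (c / (2 * D) / 2) with hμ | hμ
  · calc |Htilde c D μ s| ≤ 3 * exp (-(D * μ ^ 2 * s)) :=
          abs_Htilde_le_of_le_half hc hD hμ0 hμ hs
      _ ≤ 16 * exp (-(decayRate c D μ * s)) := by gcongr <;> [norm_num; exact min_le_left _ _]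
  · calc |Htilde c D μ s| ≤ 16 * exp (-(c ^ 2 / (32 * D) * s)) :=
          abs_Htilde_le_of_half_le hc hD hμ hs
      _ ≤ 16 * exp (-(decayRate c D μ * s)) := by gcongr; exact min_le_right _ _

end DecayRate

theorem measurable_Htilde (c D : ℝ) : Measurable (Function.uncurry (Htilde c D)) := by
  unfold Function.uncurry Htilde Htilde1 Htilde2
  refine Measurable.ite (measurableSet_lt measurable_fst measurable_const) (by fun_prop) ?_
  exact Measurable.ite (measurableSet_eq_fun measurable_fst measurable_const) (by fun_prop)
    (by fun_prop)

/-- The integrand of `R(cos γ, t + h, t)`, with `a = sin (γ / 2)`; Mathlib's `Real.sinc` is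
definitionally the `sinc` above. -/
noncomputable def covIntegrand (c D a t μ h : ℝ) : ℝ :=
  Real.sinc (2 * μ * a) * Htilde c D μ (t + h) * Htilde c D μ t

section CovIntegrand
variable {c D a t μ h : ℝ}

theorem measurable_covIntegrand (c D a t : ℝ) :
    Measurable (Function.uncurry (covIntegrand c D a t)) := by
  have hH : ∀ {f g : ℝ × ℝ → ℝ}, Measurable f → Measurable g →
      Measurable fun p => Htilde c D (f p) (g p) := fun hf hg =>
    (measurable_Htilde c D).comp (hf.prodMk hg)
  unfold Function.uncurry covIntegrand
  exact (Real.measurable_sinc.comp (by fun_prop)).mul (hH measurable_fst (by fun_prop)) |>.mul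
    (hH measurable_fst measurable_const)

theorem abs_covIntegrand_le (hc : 0 < c) (hD : 0 < D) (ht : 0 ≤ t) (hμ : 0 ≤ μ) (hh : 0 ≤ h) :
    |covIntegrand c D a t μ h| ≤ 256 * exp (-(decayRate c D μ * h)) := by
  have hκ := decayRate_nonneg (c := c) (μ := μ) hD.le
  have h₁ := abs_Htilde_le (s := t + h) hc hD hμ (by positivity)
  have h₂ : |Htilde c D μ t| ≤ 16 :=
    (abs_Htilde_le hc hD hμ ht).trans
      (by nlinarith [exp_le_one_iff.mpr (neg_nonpos.mpr (mul_nonneg hκ ht))])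
  have h₃ : exp (-(decayRate c D μ * (t + h))) ≤ exp (-(decayRate c D μ * h)) := by
    gcongr; linarith
  rw [covIntegrand, abs_mul, abs_mul]
  calc |Real.sinc (2 * μ * a)| * |Htilde c D μ (t + h)| * |Htilde c D μ t|
      ≤ 1 * (16 * exp (-(decayRate c D μ * (t + h)))) * 16 := by
        gcongr
        exact Real.abs_sinc_le_one _
    _ ≤ 256 * exp (-(decayRate c D μ * h)) := by nlinarith

theorem covIntegrand_lower (hc : 0 < c) (hD : 0 < D) (ht : 0 ≤ t) (ha : |a| ≤ 1) (hμ0 : 0 ≤ μ)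
    (hμ : μ < c / (2 * D)) (hμ1 : 2 * μ ≤ 1) (hh : 0 ≤ h) :
    exp (-(D * t)) / 8 * exp (-(2 * D * μ ^ 2 * h)) ≤ covIntegrand c D a t μ h := by
  have hsinc : 1 / 2 ≤ Real.sinc (2 * μ * a) := by
    apply Real.half_le_sinc
    rw [abs_mul, abs_of_nonneg (by positivity : 0 ≤ 2 * μ)]
    nlinarith [abs_nonneg a]
  have h₁ := Htilde_lower (s := t + h) hc hD hμ0 hμ (by positivity)
  have h₂ := Htilde_lower hc hD hμ0 hμ ht
  have hexp : exp (-(D * t)) * exp (-(2 * D * μ ^ 2 * h)) ≤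
      exp (-(2 * D * μ ^ 2 * (t + h))) * exp (-(2 * D * μ ^ 2 * t)) := by
    rw [← exp_add, ← exp_add, exp_le_exp]
    nlinarith [mul_nonneg (mul_nonneg hD.le ht) (by nlinarith : 0 ≤ 1 - 4 * μ ^ 2)]
  calc exp (-(D * t)) / 8 * exp (-(2 * D * μ ^ 2 * h))
      ≤ 1 / 2 * (exp (-(2 * D * μ ^ 2 * (t + h))) / 2) * (exp (-(2 * D * μ ^ 2 * t)) / 2) := by
        linarith
    _ ≤ covIntegrand c D a t μ h :=
        mul_le_mul (mul_le_mul hsinc h₁ (by positivity) (by linarith)) h₂ (by positivity)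
          (mul_nonneg (by linarith) (Htilde_nonneg hc hD hμ0 hμ (by positivity)))

end CovIntegrand

theorem lintegral_enorm_integral_le_lintegral_lintegral_enorm {α β E : Type*}
    [MeasurableSpace α] [MeasurableSpace β] [NormedAddCommGroup E] [NormedSpace ℝ E]
    [MeasurableSpace E] [OpensMeasurableSpace E] {μ : Measure α} {ν : Measure β} [SFinite μ]
    [SFinite ν] {f : α → β → E} (hf : AEMeasurable (Function.uncurry f) (μ.prod ν)) :
    ∫⁻ y, ‖∫ x, f x y ∂μ‖ₑ ∂ν ≤ ∫⁻ x, ∫⁻ y, ‖f x y‖ₑ ∂ν ∂μ :=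
  (lintegral_mono fun _ => enorm_integral_le_lintegral_enorm _).trans_eq
    (lintegral_lintegral_swap hf.enorm).symm

section Inverse
variable {G : Measure ℝ} [IsFiniteMeasure G] {c D ε : ℝ}

theorem setLIntegral_inv_sq_Ici_lt_top (hε : 0 < ε) :
    ∫⁻ μ in Ici ε, (ENNReal.ofReal (μ ^ 2))⁻¹ ∂G < ⊤ := by
  refine (setLIntegral_mono' measurableSet_Ici fun μ (hμ : ε ≤ μ) =>
    ENNReal.inv_le_inv.mpr (ENNReal.ofReal_le_ofReal (pow_le_pow_left₀ hε.le hμ 2))).trans_lt ?_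
  rw [setLIntegral_const]
  exact ENNReal.mul_lt_top (ENNReal.inv_lt_top.mpr (by positivity)) (measure_lt_top _ _)

theorem setLIntegral_inv_sq_Ico_lt_top_iff {b : ℝ} (hb : 0 < b) :
    ∫⁻ μ in Ico 0 b, (ENNReal.ofReal (μ ^ 2))⁻¹ ∂G < ⊤ ↔
      ∫⁻ μ in Ici 0, (ENNReal.ofReal (μ ^ 2))⁻¹ ∂G < ⊤ := by
  refine ⟨fun h => ?_, (lintegral_mono_set Ico_subset_Ici_self).trans_lt⟩
  rw [← Ico_union_Ici_eq_Ici hb.le]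
  exact (lintegral_union_le _ _ _).trans_lt
    (ENNReal.add_lt_top.mpr ⟨h, setLIntegral_inv_sq_Ici_lt_top hb⟩)

theorem inv_ofReal_decayRate_le (hD : 0 < D) (μ : ℝ) :
    (ENNReal.ofReal (decayRate c D μ))⁻¹ ≤
      (ENNReal.ofReal D)⁻¹ * (ENNReal.ofReal (μ ^ 2))⁻¹ +
        (ENNReal.ofReal (c ^ 2 / (32 * D)))⁻¹ := by
  rcases min_choice (D * μ ^ 2) (c ^ 2 / (32 * D)) with h | h <;> rw [decayRate, h]
  · rw [ENNReal.ofReal_mul hD.le, ENNReal.mul_inv (.inl (by simpa using hD)) (.inl (by simp))]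
    exact le_self_add
  · exact le_add_self

theorem setLIntegral_inv_decayRate_lt_top (hc : 0 < c) (hD : 0 < D) {u : Set ℝ}
    (hu : ∫⁻ μ in u, (ENNReal.ofReal (μ ^ 2))⁻¹ ∂G < ⊤) :
    ∫⁻ μ in u, (ENNReal.ofReal (decayRate c D μ))⁻¹ ∂G < ⊤ := by
  refine (lintegral_mono (inv_ofReal_decayRate_le hD)).trans_lt ?_
  rw [lintegral_add_right _ measurable_const, lintegral_const_mul' _ _ (by simpa using hD),
    lintegral_const]
  exact ENNReal.add_lt_top.mpr ⟨ENNReal.mul_lt_top (by simpa using hD) hu,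
    ENNReal.mul_lt_top (by simpa using (by positivity : 0 < c ^ 2 / (32 * D))) (measure_lt_top _ _)⟩

end Inverse

section Covariance
variable {G : Measure ℝ} [IsFiniteMeasure G] {c D a t : ℝ}

theorem lintegral_abs_covIntegrand_le (hc : 0 < c) (hD : 0 < D) (ht : 0 ≤ t) {μ : ℝ}
    (hμ : 0 ≤ μ) :
    ∫⁻ h in Ici 0, ENNReal.ofReal |covIntegrand c D a t μ h| ≤
      ENNReal.ofReal 256 * (ENNReal.ofReal (decayRate c D μ))⁻¹ :=
  (setLIntegral_mono (by fun_prop) fun _ hh =>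
    ENNReal.ofReal_le_ofReal (abs_covIntegrand_le hc hD ht hμ hh)).trans_eq
    (lintegral_Ici_ofReal_mul_exp_neg_mul (by norm_num) (decayRate_nonneg hD.le))

theorem lintegral_abs_integral_covIntegrand_le (hc : 0 < c) (hD : 0 < D) (ht : 0 ≤ t)
    {u : Set ℝ} (hu : MeasurableSet u) (hu0 : u ⊆ Ici 0) :
    ∫⁻ h in Ici 0, ENNReal.ofReal |∫ μ in u, covIntegrand c D a t μ h ∂G| ≤
      ENNReal.ofReal 256 * ∫⁻ μ in u, (ENNReal.ofReal (decayRate c D μ))⁻¹ ∂G := by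
  calc ∫⁻ h in Ici 0, ENNReal.ofReal |∫ μ in u, covIntegrand c D a t μ h ∂G|
      ≤ ∫⁻ μ in u, ∫⁻ h in Ici 0, ENNReal.ofReal |covIntegrand c D a t μ h| ∂volume ∂G := by
        simpa only [Real.enorm_eq_ofReal_abs] using
          lintegral_enorm_integral_le_lintegral_lintegral_enorm (μ := G.restrict u)
            (ν := volume.restrict (Ici 0)) (measurable_covIntegrand c D a t).aemeasurable
    _ ≤ ∫⁻ μ in u, ENNReal.ofReal 256 * (ENNReal.ofReal (decayRate c D μ))⁻¹ ∂G :=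
        setLIntegral_mono' hu fun μ hμ => lintegral_abs_covIntegrand_le hc hD ht (hu0 hμ)
    _ = _ := lintegral_const_mul' _ _ ENNReal.ofReal_ne_top

theorem lintegral_abs_integral_covIntegrand_lt_top (hc : 0 < c) (hD : 0 < D) (ht : 0 ≤ t)
    (hG : ∫⁻ μ in Ici 0, (ENNReal.ofReal (μ ^ 2))⁻¹ ∂G < ⊤) :
    ∫⁻ h in Ici 0, ENNReal.ofReal |∫ μ in Ici 0, covIntegrand c D a t μ h ∂G| < ⊤ :=
  (lintegral_abs_integral_covIntegrand_le hc hD ht measurableSet_Ici subset_rfl).trans_lt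
    (ENNReal.mul_lt_top ENNReal.ofReal_lt_top (setLIntegral_inv_decayRate_lt_top hc hD hG))

theorem integrableOn_covIntegrand (hc : 0 < c) (hD : 0 < D) (ht : 0 ≤ t) {h : ℝ} (hh : 0 ≤ h) :
    IntegrableOn (fun μ => covIntegrand c D a t μ h) (Ici 0) G := by
  have hmeas : Measurable fun μ => covIntegrand c D a t μ h :=
    (measurable_covIntegrand c D a t).comp (measurable_id.prodMk measurable_const)
  refine Integrable.mono' (integrable_const 256) hmeas.aestronglyMeasurable
    (ae_restrict_of_forall_mem measurableSet_Ici fun μ hμ => ?_)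
  rw [Real.norm_eq_abs]
  refine (abs_covIntegrand_le hc hD ht hμ hh).trans (mul_le_of_le_one_right (by norm_num) ?_)
  exact exp_le_one_iff.mpr (neg_nonpos.mpr (mul_nonneg (decayRate_nonneg hD.le) hh))

theorem setLIntegral_Ico_exp_le_abs_add_abs (hc : 0 < c) (hD : 0 < D) (ht : 0 ≤ t) (ha : |a| ≤ 1)
    {ε h : ℝ} (hε : 0 ≤ ε) (hεc : ε ≤ c / (2 * D)) (hε1 : ε ≤ 1 / 2) (hh : 0 ≤ h) :
    ∫⁻ μ in Ico 0 ε, ENNReal.ofReal (exp (-(D * t)) / 8 * exp (-(2 * D * μ ^ 2 * h))) ∂G ≤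
      ENNReal.ofReal |∫ μ in Ici 0, covIntegrand c D a t μ h ∂G| +
        ENNReal.ofReal |∫ μ in Ici ε, covIntegrand c D a t μ h ∂G| := by
  have hint := integrableOn_covIntegrand (G := G) (a := a) hc hD ht hh
  have hlower : ∀ μ ∈ Ico 0 ε,
      exp (-(D * t)) / 8 * exp (-(2 * D * μ ^ 2 * h)) ≤ covIntegrand c D a t μ h :=
    fun μ hμ => covIntegrand_lower hc hD ht ha hμ.1 (by linarith [hμ.2]) (by linarith [hμ.2]) hh
  calc ∫⁻ μ in Ico 0 ε, ENNReal.ofReal (exp (-(D * t)) / 8 * exp (-(2 * D * μ ^ 2 * h))) ∂G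
      ≤ ∫⁻ μ in Ico 0 ε, ENNReal.ofReal (covIntegrand c D a t μ h) ∂G :=
        setLIntegral_mono' measurableSet_Ico fun μ hμ => ENNReal.ofReal_le_ofReal (hlower μ hμ)
    _ = ENNReal.ofReal (∫ μ in Ico 0 ε, covIntegrand c D a t μ h ∂G) :=
        (ofReal_integral_eq_lintegral_ofReal (hint.mono_set Ico_subset_Ici_self)
          (ae_restrict_of_forall_mem measurableSet_Ico fun μ hμ =>
            (hlower μ hμ).trans' (by positivity))).symm
    _ = ENNReal.ofReal ((∫ μ in Ici 0, covIntegrand c D a t μ h ∂G) -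
          ∫ μ in Ici ε, covIntegrand c D a t μ h ∂G) := by
        rw [← Ici_sdiff_Ici, setIntegral_sdiff measurableSet_Ici hint (Ici_subset_Ici.mpr hε)]
    _ ≤ _ := (ENNReal.ofReal_le_ofReal ((le_abs_self _).trans (abs_sub _ _))).trans
        ENNReal.ofReal_add_le

theorem setLIntegral_inv_sq_lt_top_of_lintegral_abs_integral_covIntegrand_lt_top (hc : 0 < c)
    (hD : 0 < D) (ht : 0 ≤ t) (ha : |a| ≤ 1)
    (hR : ∫⁻ h in Ici 0, ENNReal.ofReal |∫ μ in Ici 0, covIntegrand c D a t μ h ∂G| < ⊤) :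
    ∫⁻ μ in Ici 0, (ENNReal.ofReal (μ ^ 2))⁻¹ ∂G < ⊤ := by
  set ε := min (1 / 2) (c / (2 * D))
  have hε : 0 < ε := lt_min (by norm_num) (by positivity)
  set K := exp (-(D * t)) / 8
  have htail : ∫⁻ h in Ici 0, ENNReal.ofReal |∫ μ in Ici ε, covIntegrand c D a t μ h ∂G| < ⊤ :=
    (lintegral_abs_integral_covIntegrand_le hc hD ht measurableSet_Ici
      (Ici_subset_Ici.mpr hε.le)).trans_lt (ENNReal.mul_lt_top ENNReal.ofReal_lt_top
        (setLIntegral_inv_decayRate_lt_top hc hD (setLIntegral_inv_sq_Ici_lt_top hε)))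
  have htail_meas :
      Measurable fun h => ENNReal.ofReal |∫ μ in Ici ε, covIntegrand c D a t μ h ∂G| :=
    (measurable_covIntegrand c D a t).stronglyMeasurable.integral_prod_left.measurable.abs
      |>.ennreal_ofReal
  have hswap : ∫⁻ h in Ici 0, ∫⁻ μ in Ico 0 ε, ENNReal.ofReal (K * exp (-(2 * D * μ ^ 2 * h))) ∂G =
      ENNReal.ofReal K * (ENNReal.ofReal (2 * D))⁻¹ *
        ∫⁻ μ in Ico 0 ε, (ENNReal.ofReal (μ ^ 2))⁻¹ ∂G := by
    rw [lintegral_lintegral_swap (by fun_prop), ← lintegral_const_mul' _ _ (by finiteness)]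
    refine setLIntegral_congr_fun measurableSet_Ico fun μ _ => ?_
    rw [lintegral_Ici_ofReal_mul_exp_neg_mul (by positivity) (by positivity),
      ENNReal.ofReal_mul (by positivity : (0 : ℝ) ≤ 2 * D),
      ENNReal.mul_inv (.inl (by simpa using hD)) (.inl ENNReal.ofReal_ne_top), mul_assoc]
  have hfin : ENNReal.ofReal K * (ENNReal.ofReal (2 * D))⁻¹ *
      ∫⁻ μ in Ico 0 ε, (ENNReal.ofReal (μ ^ 2))⁻¹ ∂G < ⊤ := by
    rw [← hswap]
    refine (setLIntegral_mono' measurableSet_Ici fun h hh => setLIntegral_Ico_exp_le_abs_add_abs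
      hc hD ht ha hε.le (min_le_right _ _) (min_le_left _ _) hh).trans_lt ?_
    rw [lintegral_add_right _ htail_meas]
    exact ENNReal.add_lt_top.mpr ⟨hR, htail⟩
  rw [← setLIntegral_inv_sq_Ico_lt_top_iff hε]
  exact ENNReal.lt_top_of_mul_ne_top_right hfin.ne
    (mul_ne_zero (by simpa [K] using exp_pos _) (ENNReal.inv_ne_zero.mpr ENNReal.ofReal_ne_top))

end Covariance

theorem short_range_dependence_general
    (c D : ℝ) (hc : 0 < c) (hD : 0 < D)
    (G : MeasureTheory.Measure ℝ) [MeasureTheory.IsFiniteMeasure G]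
    (t : ℝ) (ht : 0 ≤ t)
    (γ : ℝ) :
    (∫⁻ h in Set.Ici (0 : ℝ),
        ENNReal.ofReal
          |∫ μ in Set.Ici (0 : ℝ),
              _root_.sinc (2 * μ * Real.sin (γ / 2)) * Htilde c D μ (t + h) * Htilde c D μ t ∂G|
        ∂volume) < ⊤
      ↔ (∫⁻ μ in Set.Ico (0 : ℝ) (c / (2 * D)), (ENNReal.ofReal (μ ^ 2))⁻¹ ∂G) < ⊤ := by
  rw [setLIntegral_inv_sq_Ico_lt_top_iff (by positivity)]
  exact ⟨setLIntegral_inv_sq_lt_top_of_lintegral_abs_integral_covIntegrand_lt_top hc hD ht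
    (abs_sin_le_one _), lintegral_abs_integral_covIntegrand_lt_top hc hD ht⟩

/-- Short-range dependence at angular distance `γ ∈ (0,π]`:
`∫_0^∞ |R(cos γ, t+h, t)| dh < ∞` if and only if
`∫_{[0,c/(2D))} μ⁻² G(dμ) < ∞` (the integrand being `+∞` at `μ = 0`), where
`R(cos γ, t, t') = ∫ sinc(2μ sin(γ/2)) H̃(μ,t) H̃(μ,t') G(dμ)`. -/
theorem short_range_dependence
    (c D : ℝ) (hc : 0 < c) (hD : 0 < D)
    (G : MeasureTheory.Measure ℝ) [MeasureTheory.IsFiniteMeasure G]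
    (hG0 : G (Set.Iio 0) = 0) (t : ℝ) (ht : 0 ≤ t)
    (γ : ℝ) (hγ : γ ∈ Set.Ioc 0 Real.pi) :
    (∫⁻ h in Set.Ici (0 : ℝ),
        ENNReal.ofReal
          |∫ μ in Set.Ici (0 : ℝ),
              _root_.sinc (2 * μ * Real.sin (γ / 2)) * Htilde c D μ (t + h) * Htilde c D μ t ∂G|
        ∂volume) < ⊤
      ↔ (∫⁻ μ in Set.Ico (0 : ℝ) (c / (2 * D)), (ENNReal.ofReal (μ ^ 2))⁻¹ ∂G) < ⊤ :=
  short_range_dependence_general c D hc hD G t ht γ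
end

section
/- Let c, D > 0 and let G be a finite Borel measure on [0,∞). Then for every t ≥ 0 and every L ∈ ℕ, 0 ≤ Σ_{l=L}^∞ (2l+1)·C_l(t,t) ≤ Σ_{l=L}^∞ (2l+1)·C_l. (Since the squared L²(Ω×S²) error of the degree-L truncated Laplace series approximation T_{H,L} to the spherical hyperbolic diffusion field T_H equals (1/(4π))·Σ_{l=L}^∞(2l+1)·C_l(t,t), this yields the truncation error bound sup_{t≥0} ‖T_H(·,t) − T_{H,L}(·,t)‖_{L²(Ω×S²)} ≤ (1/(2√π))·(Σ_{l=L}^∞(2l+1)·C_l)^{1/2}.) -/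
open MeasureTheory Real Set

/-- Bessel function of the first kind of real order `ν`, via its power series
(with real powers; for `ν > 0` this gives `besselJ ν 0 = 0`). -/
noncomputable def besselJ (ν x : ℝ) : ℝ :=
  ∑' n : ℕ, ((-1 : ℝ) ^ n / (n.factorial * Real.Gamma ((n : ℝ) + ν + 1))) *
    (x / 2) ^ (2 * (n : ℝ) + ν)

/-- The integrand `J_{l+1/2}(μ)² / μ`, with its value at `μ = 0` defined by
continuous extension (`2/π` for `l = 0`, `0` for `l ≥ 1`). -/
noncomputable def besselInt (l : ℕ) (μ : ℝ) : ℝ :=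
  if μ = 0 then (if l = 0 then 2 / Real.pi else 0)
  else besselJ ((l : ℝ) + 1 / 2) μ ^ 2 / μ

/-- Angular power spectrum `C_l(t,t')` of the spherical hyperbolic diffusion field. -/
noncomputable def Cl (c D : ℝ) (G : MeasureTheory.Measure ℝ) (l : ℕ) (t t' : ℝ) : ℝ :=
  2 * Real.pi ^ 2 * ∫ μ in Set.Ici (0 : ℝ), besselInt l μ * Htilde c D μ t * Htilde c D μ t' ∂G

theorem cosh_add_mul_sinh_le_exp {m : ℝ} (hm : 1 ≤ m) (s : ℝ) :
    cosh s + m * sinh s ≤ exp (m * s) := by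
  have h_neg : exp s * (1 - 2 * s) ≤ exp (-s) := by
    rw [show -s = s + -2 * s by ring, exp_add]
    exact mul_le_mul_of_nonneg_left (by linarith [add_one_le_exp (-2 * s)]) (exp_pos s).le
  have h_pos : exp s * (1 + (m - 1) * s) ≤ exp (m * s) := by
    rw [show m * s = s + (m - 1) * s by ring, exp_add]
    exact mul_le_mul_of_nonneg_left (by linarith [add_one_le_exp ((m - 1) * s)]) (exp_pos s).le
  rw [cosh_eq, sinh_eq]
  nlinarith

theorem abs_cos_add_mul_sin_le_exp {x r : ℝ} (hx : 0 ≤ x) (hr : 0 ≤ r) :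
    |cos x + r * sin x| ≤ exp (r * x) :=
  calc |cos x + r * sin x| ≤ |cos x| + r * |sin x| := by
        simpa [abs_mul, abs_of_nonneg hr] using abs_add_le (cos x) (r * sin x)
    _ ≤ 1 + r * x := by
        gcongr
        · exact abs_cos_le_one x
        · simpa [abs_of_nonneg hx] using abs_sin_le_abs (x := x)
    _ ≤ exp (r * x) := by linarith [add_one_le_exp (r * x)]

theorem abs_exp_neg_mul_le_one {a y : ℝ} (h : |y| ≤ exp a) : |exp (-a) * y| ≤ 1 := by
  rw [abs_mul, abs_exp, exp_neg]
  exact inv_mul_le_one_of_le₀ h (exp_pos a).le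

section Htilde

variable {c D : ℝ} (hc : 0 < c) (hD : 0 < D)
include hc hD

theorem abs_Htilde1_le_one {μ t : ℝ} (hμ : 0 ≤ μ) (hμc : μ < c / (2 * D)) (ht : 0 ≤ t) :
    |Htilde1 c D μ t| ≤ 1 := by
  set b := √(c ^ 2 / (4 * D ^ 2) - μ ^ 2)
  have hsq : c ^ 2 / (4 * D ^ 2) = (c / (2 * D)) ^ 2 := by ring
  have hb : 0 < b := sqrt_pos.2 (by nlinarith)
  have hbc : b ≤ c / (2 * D) := sqrt_le_left (by positivity) |>.2 (by nlinarith)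
  have hm : 1 ≤ c / (2 * D * b) := by
    rw [le_div_iff₀ (by positivity)]; rw [le_div_iff₀ (by positivity)] at hbc; linarith
  have hs : 0 ≤ c * t * b := by positivity
  rw [Htilde1, show -(c ^ 2 * t) / (2 * D) = -(c / (2 * D * b) * (c * t * b)) by
    field_simp]
  refine abs_exp_neg_mul_le_one ?_
  rw [abs_of_nonneg (add_nonneg (cosh_pos _).le (by nlinarith [sinh_nonneg_iff.2 hs]))]
  exact cosh_add_mul_sinh_le_exp hm _

theorem abs_Htilde2_le_one {μ t : ℝ} (hμc : c / (2 * D) < μ) (ht : 0 ≤ t) :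
    |Htilde2 c D μ t| ≤ 1 := by
  set g := √(μ ^ 2 - c ^ 2 / (4 * D ^ 2))
  have hsq : c ^ 2 / (4 * D ^ 2) = (c / (2 * D)) ^ 2 := by ring
  have hg : 0 < g := sqrt_pos.2 (by nlinarith [div_pos hc (by positivity : (0 : ℝ) < 2 * D)])
  rw [Htilde2, show -(c ^ 2 * t) / (2 * D) = -(c / (2 * D * g) * (c * t * g)) by
    field_simp]
  exact abs_exp_neg_mul_le_one (abs_cos_add_mul_sin_le_exp (by positivity) (by positivity))

theorem abs_Htilde_le_one {μ t : ℝ} (hμ : 0 ≤ μ) (ht : 0 ≤ t) : |Htilde c D μ t| ≤ 1 := by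
  unfold Htilde
  split_ifs with h_sub h_crit
  · exact abs_Htilde1_le_one hc hD hμ h_sub ht
  · rw [show -(c ^ 2 * t) / (2 * D) = -(c ^ 2 * t / (2 * D)) by ring]
    refine abs_exp_neg_mul_le_one ?_
    rw [abs_of_nonneg (by positivity), add_comm]
    exact add_one_le_exp _
  · exact abs_Htilde2_le_one hc hD (lt_of_le_of_ne (not_lt.1 h_sub) (Ne.symm h_crit)) ht

end Htilde

theorem Htilde_zero (c D μ : ℝ) : Htilde c D μ 0 = 1 := by
  unfold Htilde Htilde1 Htilde2
  split_ifs <;> simp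

theorem Gamma_nat_add_half_eq_factorial_div (n : ℕ) :
    Gamma (n + 1 / 2) = √π * (2 * n).factorial / (4 ^ n * n.factorial) := by
  have h := Gamma_mul_Gamma_add_half (n + 1 / 2)
  rw [show (n : ℝ) + 1 / 2 + 1 / 2 = n + 1 by ring,
    show 2 * ((n : ℝ) + 1 / 2) = (2 * n : ℕ) + 1 by push_cast; ring,
    Gamma_nat_eq_factorial, Gamma_nat_eq_factorial,
    show (1 : ℝ) - ((2 * n : ℕ) + 1) = -(2 * n : ℕ) by ring, rpow_neg zero_le_two,
    rpow_natCast, pow_mul] at h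
  have : (0 : ℝ) < n.factorial := by positivity
  field_simp at h ⊢
  norm_num at h ⊢
  linarith

theorem sqrt_pi_div_two_le_Gamma_nat_add_half (n : ℕ) : √π / 2 ≤ Gamma (n + 1 / 2) := by
  have hπ : 0 < √π := sqrt_pos.2 pi_pos
  induction n with
  | zero => rw [Nat.cast_zero, zero_add, Gamma_one_half_eq]; linarith
  | succ n ih =>
    rw [show ((n + 1 : ℕ) : ℝ) + 1 / 2 = (n + 1 / 2) + 1 by push_cast; ring,
      Gamma_add_one (by positivity)]
    rcases Nat.eq_zero_or_pos n with rfl | hn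
    · rw [Nat.cast_zero, zero_add, Gamma_one_half_eq]; linarith
    · have : (1 : ℝ) ≤ n := by exact_mod_cast hn
      nlinarith

noncomputable def besselTerm (ν x : ℝ) (n : ℕ) : ℝ :=
  ((-1 : ℝ) ^ n / (n.factorial * Gamma ((n : ℝ) + ν + 1))) * (x / 2) ^ (2 * (n : ℝ) + ν)

theorem besselJ_eq_tsum (ν x : ℝ) : besselJ ν x = ∑' n, besselTerm ν x n := rfl

theorem rpow_two_mul_nat_add {y : ℝ} (hy : 0 < y) (n : ℕ) (ν : ℝ) :
    y ^ (2 * (n : ℝ) + ν) = (y ^ 2) ^ n * y ^ ν := by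
  rw [rpow_add hy, show 2 * (n : ℝ) = (2 * n : ℕ) by push_cast; ring, rpow_natCast, pow_mul]

section HalfIntegerOrder

variable {x : ℝ} (hx : 0 < x) (k : ℕ)
include hx

theorem norm_besselTerm_le (n : ℕ) :
    ‖besselTerm (k - 1 / 2) x n‖ ≤
      2 / √π * (x / 2) ^ ((k : ℝ) - 1 / 2) * (((x / 2) ^ 2) ^ n / n.factorial) := by
  have hΓ : √π / 2 ≤ Gamma (n + ((k : ℝ) - 1 / 2) + 1) := by
    rw [show (n : ℝ) + ((k : ℝ) - 1 / 2) + 1 = (n + k : ℕ) + 1 / 2 by push_cast; ring]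
    exact sqrt_pi_div_two_le_Gamma_nat_add_half _
  have hπ : 0 < √π := sqrt_pos.2 pi_pos
  have hf : (0 : ℝ) < n.factorial := by positivity
  have h_denom : 0 ≤ n.factorial * Gamma (n + ((k : ℝ) - 1 / 2) + 1) := by nlinarith
  rw [besselTerm, norm_mul, norm_div, norm_pow, norm_neg, norm_one, one_pow,
    Real.norm_of_nonneg h_denom, Real.norm_of_nonneg (by positivity),
    rpow_two_mul_nat_add (half_pos hx)]
  calc 1 / (n.factorial * Gamma (n + ((k : ℝ) - 1 / 2) + 1)) *
        (((x / 2) ^ 2) ^ n * (x / 2) ^ ((k : ℝ) - 1 / 2))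
      ≤ 1 / (n.factorial * (√π / 2)) * (((x / 2) ^ 2) ^ n * (x / 2) ^ ((k : ℝ) - 1 / 2)) := by
        gcongr
    _ = _ := by field_simp

theorem summable_besselTerm : Summable (besselTerm (k - 1 / 2) x) :=
  .of_norm_bounded ((summable_pow_div_factorial _).mul_left _) (norm_besselTerm_le hx k)

theorem abs_besselJ_le :
    |besselJ (k - 1 / 2) x| ≤ 2 / √π * (x / 2) ^ ((k : ℝ) - 1 / 2) * exp ((x / 2) ^ 2) := by
  have h_norm : Summable fun n => ‖besselTerm (k - 1 / 2) x n‖ :=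
    (summable_besselTerm hx k).norm
  rw [exp_eq_exp_ℝ, NormedSpace.exp_eq_tsum_div, ← tsum_mul_left, besselJ_eq_tsum]
  exact (norm_tsum_le_tsum_norm h_norm).trans <| h_norm.tsum_le_tsum (norm_besselTerm_le hx k)
    ((summable_pow_div_factorial _).mul_left _)

end HalfIntegerOrder

section Recurrence

variable {ν x : ℝ} (hν : 0 < ν) (hx : 0 < x)
include hν hx

theorem besselTerm_recurrence_zero :
    2 * ν / x * besselTerm ν x 0 - besselTerm (ν - 1) x 0 = 0 := by
  have hΓ : Gamma (ν + 1) = ν * Gamma ν := Gamma_add_one hν.ne'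
  have hΓpos : 0 < Gamma ν := Gamma_pos_of_pos hν
  have hpow : (x / 2) ^ ν = (x / 2) ^ (ν - 1) * (x / 2) := by
    rw [← rpow_add_one (by positivity), sub_add_cancel]
  simp only [besselTerm, Nat.cast_zero, mul_zero, zero_add, pow_zero, Nat.factorial_zero,
    Nat.cast_one, one_mul, sub_add_cancel, hΓ, hpow]
  field_simp
  ring

theorem besselTerm_recurrence_succ (n : ℕ) :
    2 * ν / x * besselTerm ν x (n + 1) - besselTerm (ν - 1) x (n + 1) =
      besselTerm (ν + 1) x n := by
  have hΓ : Gamma (n + ν + 2) = (n + ν + 1) * Gamma (n + ν + 1) := by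
    rw [← Gamma_add_one (by positivity)]; ring_nf
  have hΓpos : 0 < Gamma (n + ν + 1) := Gamma_pos_of_pos (by positivity)
  have hpow : (x / 2) ^ (2 * (n : ℝ) + ν + 2) = (x / 2) ^ (2 * (n : ℝ) + ν + 1) * (x / 2) := by
    rw [← rpow_add_one (by positivity)]; ring_nf
  simp only [besselTerm, Nat.factorial_succ, Nat.cast_mul, Nat.cast_succ, pow_succ]
  rw [show (n + 1 : ℝ) + ν + 1 = n + ν + 2 by ring,
    show (n + 1 : ℝ) + (ν - 1) + 1 = n + ν + 1 by ring,
    show (n : ℝ) + (ν + 1) + 1 = n + ν + 2 by ring,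
    show 2 * ((n : ℝ) + 1) + ν = 2 * n + ν + 2 by ring,
    show 2 * ((n : ℝ) + 1) + (ν - 1) = 2 * n + ν + 1 by ring,
    show 2 * (n : ℝ) + (ν + 1) = 2 * n + ν + 1 by ring, hΓ, hpow]
  field_simp
  ring

theorem besselJ_add_one (h₀ : Summable (besselTerm ν x))
    (h₁ : Summable (besselTerm (ν - 1) x)) :
    besselJ (ν + 1) x = 2 * ν / x * besselJ ν x - besselJ (ν - 1) x := by
  have h_diff := (h₀.mul_left (2 * ν / x)).sub h₁
  rw [besselJ_eq_tsum, besselJ_eq_tsum, besselJ_eq_tsum, ← tsum_mul_left,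
    ← (h₀.mul_left _).tsum_sub h₁, h_diff.tsum_eq_zero_add, besselTerm_recurrence_zero hν hx,
    zero_add]
  exact tsum_congr fun n => (besselTerm_recurrence_succ hν hx n).symm

end Recurrence

theorem rpow_neg_half_div_sqrt_pi {x : ℝ} (hx : 0 < x) :
    (x / 2) ^ (-(1 / 2) : ℝ) / √π = √(2 / (π * x)) := by
  rw [rpow_neg (by positivity), ← sqrt_eq_rpow, ← sqrt_inv, inv_div, ← sqrt_div' _ pi_pos.le,
    div_div, mul_comm x]

section ClosedForms

variable {x : ℝ} (hx : 0 < x)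
include hx

theorem besselJ_neg_half : besselJ (-(1 / 2)) x = √(2 / (π * x)) * cos x := by
  rw [← rpow_neg_half_div_sqrt_pi hx, besselJ_eq_tsum, cos_eq_tsum, ← tsum_mul_left]
  refine tsum_congr fun n => ?_
  rw [besselTerm, show (n : ℝ) + -(1 / 2) + 1 = n + 1 / 2 by ring,
    Gamma_nat_add_half_eq_factorial_div, rpow_two_mul_nat_add (half_pos hx),
    show (x / 2) ^ 2 = x ^ 2 / 4 by ring, div_pow, ← pow_mul]
  have : (0 : ℝ) < √π := sqrt_pos.2 pi_pos
  field_simp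

theorem besselJ_half : besselJ (1 / 2) x = √(2 / (π * x)) * sin x := by
  rw [← rpow_neg_half_div_sqrt_pi hx, besselJ_eq_tsum, sin_eq_tsum, ← tsum_mul_left]
  refine tsum_congr fun n => ?_
  rw [besselTerm, show (n : ℝ) + 1 / 2 + 1 = (n + 1 : ℕ) + 1 / 2 by push_cast; ring,
    Gamma_nat_add_half_eq_factorial_div,
    show 2 * (n : ℝ) + 1 / 2 = 2 * n + 1 + -(1 / 2) by ring,
    rpow_add (half_pos hx), show 2 * (n : ℝ) + 1 = (2 * n + 1 : ℕ) by push_cast; ring,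
    rpow_natCast, show 2 * (n + 1) = (2 * n + 1) + 1 by ring, Nat.factorial_succ,
    Nat.factorial_succ n, div_pow, show (4 : ℝ) ^ (n + 1) = 2 ^ (2 * n + 1) * 2 by
      rw [pow_succ, pow_succ, pow_mul]; ring]
  have : (0 : ℝ) < √π := sqrt_pos.2 pi_pos
  push_cast
  field_simp
  ring

end ClosedForms

section LargeArgument

theorem sqrt_two_div_pi_mul_le_one {x : ℝ} (hx : 1 ≤ x) : √(2 / (π * x)) ≤ 1 := by
  rw [sqrt_le_one, div_le_one (by positivity)]
  nlinarith [pi_gt_three]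

theorem abs_besselJ_neg_half_le_one {x : ℝ} (hx : 1 ≤ x) : |besselJ (-(1 / 2)) x| ≤ 1 := by
  rw [besselJ_neg_half (by linarith), abs_mul, abs_of_nonneg (sqrt_nonneg _)]
  exact mul_le_one₀ (sqrt_two_div_pi_mul_le_one hx) (abs_nonneg _) (abs_cos_le_one x)

theorem abs_besselJ_half_le_one {x : ℝ} (hx : 1 ≤ x) : |besselJ (1 / 2) x| ≤ 1 := by
  rw [besselJ_half (by linarith), abs_mul, abs_of_nonneg (sqrt_nonneg _)]
  exact mul_le_one₀ (sqrt_two_div_pi_mul_le_one hx) (abs_nonneg _) (abs_sin_le_one x)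

theorem abs_besselJ_add_one_le {ν x C : ℝ} (hν : 0 < ν) (hx : 1 ≤ x)
    (h₀ : Summable (besselTerm ν x)) (h₁ : Summable (besselTerm (ν - 1) x))
    (hC₀ : |besselJ ν x| ≤ C) (hC₁ : |besselJ (ν - 1) x| ≤ C) :
    |besselJ (ν + 1) x| ≤ (2 * ν + 1) * C := by
  have hx₀ : 0 < x := by linarith
  have h_coeff : |2 * ν / x| ≤ 2 * ν := by
    rw [abs_of_pos (by positivity)]
    exact div_le_self (by positivity) hx
  rw [besselJ_add_one hν hx₀ h₀ h₁]
  calc |2 * ν / x * besselJ ν x - besselJ (ν - 1) x|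
      ≤ |2 * ν / x| * |besselJ ν x| + |besselJ (ν - 1) x| := by
        rw [← abs_mul]; exact abs_sub _ _
    _ ≤ 2 * ν * C + C := by
        gcongr
    _ = (2 * ν + 1) * C := by ring

theorem exists_abs_besselJ_le_of_one_le (k : ℕ) :
    ∃ C, ∀ x, 1 ≤ x → |besselJ (k - 1 / 2) x| ≤ C ∧ |besselJ (k + 1 / 2) x| ≤ C := by
  induction k with
  | zero =>
    refine ⟨1, fun x hx => ?_⟩
    rw [Nat.cast_zero, zero_sub, zero_add]
    exact ⟨abs_besselJ_neg_half_le_one hx, abs_besselJ_half_le_one hx⟩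
  | succ k ih =>
    obtain ⟨C, hC⟩ := ih
    have hC_nonneg : 0 ≤ C := (abs_nonneg _).trans (hC 1 le_rfl).1
    refine ⟨(2 * (k + 1 / 2) + 1) * C, fun x hx => ?_⟩
    have hx₀ : 0 < x := by linarith
    have h_lower : ((k : ℝ) + 1 / 2) - 1 = k - 1 / 2 := by ring
    have h_upper : ((k + 1 : ℕ) : ℝ) - 1 / 2 = k + 1 / 2 := by push_cast; ring
    rw [h_upper, show ((k + 1 : ℕ) : ℝ) + 1 / 2 = k + 1 / 2 + 1 by push_cast; ring]
    refine ⟨(hC x hx).2.trans (le_mul_of_one_le_left hC_nonneg ?_), ?_⟩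
    · linarith [k.cast_nonneg (α := ℝ)]
    · exact abs_besselJ_add_one_le (by positivity) hx (h_upper ▸ summable_besselTerm hx₀ (k + 1))
        (h_lower ▸ summable_besselTerm hx₀ k) (hC x hx).2 (h_lower ▸ (hC x hx).1)

end LargeArgument

theorem besselJ_sq_div_le_of_le_two (l : ℕ) {x : ℝ} (hx : 0 < x) (hx₂ : x ≤ 2) :
    besselJ (l + 1 / 2) x ^ 2 / x ≤ 2 * exp 2 / π := by
  have hJ : |besselJ (l + 1 / 2) x| ≤ 2 / √π * √(x / 2) * exp 1 := by
    have h := abs_besselJ_le hx (l + 1)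
    rw [show ((l + 1 : ℕ) : ℝ) - 1 / 2 = l + 1 / 2 by push_cast; ring] at h
    rw [sqrt_eq_rpow (x / 2)]
    have h_rpow : (x / 2) ^ ((l : ℝ) + 1 / 2) ≤ (x / 2) ^ (1 / 2 : ℝ) :=
      rpow_le_rpow_of_exponent_ge (by positivity) (by linarith) (by simp)
    exact h.trans (mul_le_mul (mul_le_mul_of_nonneg_left h_rpow (by positivity))
      (exp_le_exp.2 (by nlinarith)) (by positivity) (by positivity))
  rw [div_le_iff₀ hx]
  calc besselJ (l + 1 / 2) x ^ 2 ≤ (2 / √π * √(x / 2) * exp 1) ^ 2 :=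
        sq_le_sq' (abs_le.1 hJ).1 (abs_le.1 hJ).2
    _ = 2 * exp 2 / π * x := by
        rw [mul_pow, mul_pow, div_pow, sq_sqrt pi_pos.le, sq_sqrt (by positivity),
          ← exp_nat_mul]
        push_cast
        field_simp

theorem besselInt_nonneg (l : ℕ) {μ : ℝ} (hμ : 0 ≤ μ) : 0 ≤ besselInt l μ := by
  unfold besselInt
  split_ifs
  · positivity
  · rfl
  · positivity

theorem exists_besselInt_le (l : ℕ) : ∃ B, ∀ μ, 0 ≤ μ → besselInt l μ ≤ B := by
  obtain ⟨C, hC⟩ := exists_abs_besselJ_le_of_one_le (l + 1)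
  have h_at_zero : 2 / π ≤ 2 * exp 2 / π := by
    gcongr; linarith [one_le_exp (by norm_num : (0 : ℝ) ≤ 2)]
  refine ⟨2 * exp 2 / π + C ^ 2, fun μ hμ => ?_⟩
  rcases hμ.eq_or_lt with rfl | hμ
  · rw [besselInt, if_pos rfl]
    split_ifs
    · linarith [sq_nonneg C]
    · positivity
  rw [besselInt, if_neg hμ.ne']
  rcases le_total μ 1 with hμ₁ | hμ₁
  · nlinarith [besselJ_sq_div_le_of_le_two l hμ (by linarith)]
  · have hJ := (hC μ hμ₁).1
    rw [show ((l + 1 : ℕ) : ℝ) - 1 / 2 = l + 1 / 2 by push_cast; ring] at hJ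
    have : besselJ (l + 1 / 2) μ ^ 2 ≤ C ^ 2 := sq_le_sq' (abs_le.1 hJ).1 (abs_le.1 hJ).2
    have := div_le_self (sq_nonneg (besselJ (l + 1 / 2) μ)) hμ₁
    have : 0 ≤ 2 * exp 2 / π := by positivity
    linarith

theorem aestronglyMeasurable_besselJ (l : ℕ) (G : Measure ℝ) :
    AEStronglyMeasurable (besselJ (l + 1 / 2)) (G.restrict (Ici 0)) := by
  refine aestronglyMeasurable_of_tendsto_ae Filter.atTop
    (f := fun N x => ∑ n ∈ Finset.range N, besselTerm (l + 1 / 2) x n)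
    (fun N => (Finset.measurable_sum _ fun n _ => by
      unfold besselTerm; fun_prop).aestronglyMeasurable) ?_
  filter_upwards [ae_restrict_mem measurableSet_Ici] with x hx
  rcases (mem_Ici.1 hx).eq_or_lt with rfl | hx
  · -- `G` may charge the point `0`, so convergence is needed there as well.
    have h_zero (n : ℕ) : besselTerm (l + 1 / 2) 0 n = 0 := by
      rw [besselTerm, zero_div, zero_rpow (by positivity), mul_zero]
    simp only [h_zero, besselJ_eq_tsum, Finset.sum_const_zero, tsum_zero]
    exact tendsto_const_nhds
  · have h := summable_besselTerm hx (l + 1)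
    rw [show ((l + 1 : ℕ) : ℝ) - 1 / 2 = l + 1 / 2 by push_cast; ring] at h
    exact h.hasSum.tendsto_sum_nat

-- Since `J ^ 2 / 0 = 0`, the indicator alone supplies the value of `besselInt l` at `0`.
theorem besselInt_eq_add_indicator (l : ℕ) :
    besselInt l = fun μ => besselJ (l + 1 / 2) μ ^ 2 / μ +
      ({0} : Set ℝ).indicator (fun _ => if l = 0 then 2 / π else 0) μ := by
  ext μ
  by_cases h : μ = 0 <;> simp [besselInt, h]

theorem integrable_besselInt (l : ℕ) (G : Measure ℝ) [IsFiniteMeasure G] :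
    Integrable (besselInt l) (G.restrict (Ici 0)) := by
  obtain ⟨B, hB⟩ := exists_besselInt_le l
  refine .of_bound ?_ B ?_
  · rw [besselInt_eq_add_indicator]
    have hJ := (aestronglyMeasurable_besselJ l G).aemeasurable
    exact (((hJ.pow_const 2).div aemeasurable_id).add
      (measurable_const.indicator (measurableSet_singleton 0)).aemeasurable).aestronglyMeasurable
  · filter_upwards [ae_restrict_mem measurableSet_Ici] with μ hμ
    rw [norm_of_nonneg (besselInt_nonneg l hμ)]
    exact hB μ hμ

theorem Cl_le_Cl_zero {c D : ℝ} (hc : 0 < c) (hD : 0 < D) (G : Measure ℝ) [IsFiniteMeasure G]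
    (l : ℕ) {t : ℝ} (ht : 0 ≤ t) : Cl c D G l t t ≤ Cl c D G l 0 0 := by
  unfold Cl
  simp only [Htilde_zero, mul_one]
  refine mul_le_mul_of_nonneg_left
    (integral_mono_of_nonneg ?_ (integrable_besselInt l G) ?_) (by positivity)
  · filter_upwards [ae_restrict_mem measurableSet_Ici] with μ hμ
    rw [mul_assoc]
    exact mul_nonneg (besselInt_nonneg l hμ) (mul_self_nonneg _)
  · filter_upwards [ae_restrict_mem measurableSet_Ici] with μ hμ
    have h_sq : Htilde c D μ t * Htilde c D μ t ≤ 1 := by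
      rw [← sq, sq_le_one_iff_abs_le_one]
      exact abs_Htilde_le_one hc hD hμ ht
    rw [mul_assoc]
    exact mul_le_of_le_one_right (besselInt_nonneg l hμ) h_sq

theorem truncation_tail_sum_le_general
    (c D : ℝ) (hc : 0 < c) (hD : 0 < D)
    (G : MeasureTheory.Measure ℝ) [MeasureTheory.IsFiniteMeasure G] :
    ∀ t : ℝ, 0 ≤ t → ∀ L : ℕ,
      ∑' l : ℕ, ENNReal.ofReal ((2 * ((L + l : ℕ) : ℝ) + 1) * Cl c D G (L + l) t t)
        ≤ ∑' l : ℕ, ENNReal.ofReal ((2 * ((L + l : ℕ) : ℝ) + 1) * Cl c D G (L + l) 0 0) :=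
  fun _ ht L => ENNReal.tsum_le_tsum fun l => ENNReal.ofReal_le_ofReal <|
    mul_le_mul_of_nonneg_left (Cl_le_Cl_zero hc hD G (L + l) ht) (by positivity)

/-- The tail sums of the angular power spectrum satisfy
`0 ≤ Σ_{l≥L} (2l+1) C_l(t,t) ≤ Σ_{l≥L} (2l+1) C_l` for every `t ≥ 0` and every
truncation degree `L` (stated in `ℝ≥0∞`, so that it also covers possibly
divergent tail sums); this gives the truncation error bound
`‖T_H(·,t) − T_{H,L}(·,t)‖ ≤ (1/(2√π))(Σ_{l≥L}(2l+1)C_l)^{1/2}`. -/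
theorem truncation_tail_sum_le
    (c D : ℝ) (hc : 0 < c) (hD : 0 < D)
    (G : MeasureTheory.Measure ℝ) [MeasureTheory.IsFiniteMeasure G]
    (hG0 : G (Set.Iio 0) = 0) :
    ∀ t : ℝ, 0 ≤ t → ∀ L : ℕ,
      ∑' l : ℕ, ENNReal.ofReal ((2 * ((L + l : ℕ) : ℝ) + 1) * Cl c D G (L + l) t t)
        ≤ ∑' l : ℕ, ENNReal.ofReal ((2 * ((L + l : ℕ) : ℝ) + 1) * Cl c D G (L + l) 0 0) :=
  truncation_tail_sum_le_general c D hc hD G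
end
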